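/- arXiv:1507.04841 — 3 statements merged into one kernel-verified Lean document; each statement's English description precedes it below -/
import Mathlib

section
/- In the setting of the compression lemma: let R be ergodic pmp on (X,μ), Y ⊆ X of positive measure, φ : X → Y a Borel retraction with graph in R, S ≤ R_Y, and T = {(x,y) : (φx, φy) ∈ S}. If S is ergodic on (Y, μ|_Y normalized) then T is ergodic on (X,μ). -/
/-!
A `T`-saturated set `A` is the `φ`-preimage of the `S`-saturated set `A ∩ Y`, so ergodicity of `S`
makes `A ∩ Y` null or conull in `Y`, and it remains to see that `φ`-preimages of null sets are
null. Since `φ` has countable fibres, disintegrating `μ` along `φ` and sorting each fibre by its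
conditional quantiles cuts `X` (up to a null set) into countably many Borel pieces on which `φ`
is injective. For such a piece `E` of `φ ⁻¹' N \ N` with `N` null, the involution exchanging `E`
and `φ '' E ⊆ N` along `φ` has graph in `R`, hence preserves `μ`, so `μ E = μ (φ '' E) = 0`.
-/

open MeasureTheory ProbabilityTheory Set Function
open scoped ENNReal

def IsErgodicRel {X : Type} [MeasurableSpace X] (μ : Measure X)
    (S : Set (X × X)) : Prop :=
  ∀ A : Set X, MeasurableSet A → (∀ x ∈ A, ∀ y, (x, y) ∈ S → y ∈ A) →
    μ A = 0 ∨ μ A = 1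

section Quantile

variable {α : Type*} [MeasurableSpace α]

theorem subsingleton_setOf_measure_lt_le (m : Measure α) {e : α → ℝ} (he : Injective e)
    (c : ℝ≥0∞) : {x | m {z | e z < e x} < c ∧ c ≤ m {z | e z ≤ e x}}.Subsingleton := by
  suffices key : ∀ ⦃a b⦄, e a < e b → m {z | e z < e b} < c → c ≤ m {z | e z ≤ e a} → False by
    intro a ha b hb
    rcases lt_trichotomy (e a) (e b) with h | h | h
    exacts [(key h hb.1 ha.2).elim, he h, (key h ha.1 hb.2).elim]
  intro a b hab hb ha
  exact (ha.trans (measure_mono fun z hz => lt_of_le_of_lt hz hab)).not_gt hb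

theorem exists_rat_measure_lt_le [MeasurableSingletonClass α] (m : Measure α) [IsFiniteMeasure m]
    (e : α → ℝ) {x : α} (hx : m {x} ≠ 0) :
    ∃ q : ℚ, m {z | e z < e x} < ENNReal.ofReal q ∧ ENNReal.ofReal q ≤ m {z | e z ≤ e x} := by
  have hlt : m {z | e z < e x} < m {z | e z ≤ e x} :=
    calc m {z | e z < e x} < m {z | e z < e x} + m {x} :=
          ENNReal.lt_add_right (measure_ne_top _ _) hx
      _ = m ({z | e z < e x} ∪ {x}) :=
          (measure_union (by simp) (measurableSet_singleton x)).symm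
      _ ≤ m {z | e z ≤ e x} := measure_mono (union_subset (fun z (hz : e z < e x) => hz.le)
          (singleton_subset_iff.2 (le_refl (e x))))
  obtain ⟨q, -, hq, hq'⟩ := ENNReal.lt_iff_exists_rat_btwn.1 hlt
  exact ⟨q, hq, hq'.le⟩

end Quantile

section CondDistrib

variable {α β γ : Type*} [MeasurableSpace α] [MeasurableSpace β] [MeasurableSpace γ]

theorem measurable_kernel_apply_prodMk_left (κ : Kernel β α) [IsSFiniteKernel κ] {φ : γ → β}
    (hφ : Measurable φ) {t : Set (γ × α)} (ht : MeasurableSet t) :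
    Measurable fun x => κ (φ x) (Prod.mk x ⁻¹' t) :=
  (κ.comap φ hφ).measurable_kernel_prodMk_left ht

theorem ae_condDistrib_singleton_ne_zero [StandardBorelSpace α] [Nonempty α] [MeasurableEq β]
    (μ : Measure α) [IsFiniteMeasure μ] {φ : α → β} (hφ : Measurable φ)
    (hfib : ∀ y, (φ ⁻¹' {y}).Countable) :
    ∀ᵐ x ∂μ, condDistrib id φ μ (φ x) {x} ≠ 0 := by
  set κ := condDistrib id φ μ
  set D : Set (β × α) := {p | φ p.2 = p.1 ∧ κ p.1 {p.2} = 0}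
  have hD : MeasurableSet D :=
    (measurableSet_eq_fun (hφ.comp measurable_snd) measurable_fst).inter
      (measurable_kernel_apply_prodMk_left κ measurable_fst
        (measurableSet_eq_fun measurable_snd (measurable_snd.comp measurable_fst))
        (measurableSet_singleton 0))
  have hsection : ∀ y, κ y (Prod.mk y ⁻¹' D) = 0 := fun y => by
    rw [← biUnion_of_singleton (Prod.mk y ⁻¹' D)]
    exact (measure_biUnion_null_iff ((hfib y).mono fun x hx => hx.1)).2 fun x hx => hx.2
  have hpre : {x | ¬condDistrib id φ μ (φ x) {x} ≠ 0} = (fun x => (φ x, id x)) ⁻¹' D := by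
    ext x; simp [D, κ]
  rw [ae_iff, hpre, ← Measure.map_apply (hφ.prodMk measurable_id) hD,
    ← compProd_map_condDistrib measurable_id.aemeasurable, Measure.compProd_apply hD]
  exact (lintegral_congr hsection).trans lintegral_zero

theorem exists_measurableSet_injOn_cover [StandardBorelSpace α] [MeasurableEq β]
    (μ : Measure α) [IsFiniteMeasure μ] {φ : α → β} (hφ : Measurable φ)
    (hfib : ∀ y, (φ ⁻¹' {y}).Countable) :
    ∃ E : ℚ → Set α, (∀ q, MeasurableSet (E q)) ∧ (∀ q, InjOn φ (E q)) ∧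
      ∀ᵐ x ∂μ, ∃ q, x ∈ E q := by
  cases isEmpty_or_nonempty α
  · exact ⟨fun _ => ∅, fun _ => .empty, fun _ => injOn_empty φ, ae_of_all _ isEmptyElim⟩
  set κ := condDistrib id φ μ
  set e := embeddingReal α
  have he : MeasurableEmbedding e := measurableEmbedding_embeddingReal α
  -- `x ∈ E q` iff `q` lies in the jump at `x` of the distribution function of `κ (φ x)` along `e`.
  refine ⟨fun q => {x | κ (φ x) {z | e z < e x} < ENNReal.ofReal q ∧
    ENNReal.ofReal q ≤ κ (φ x) {z | e z ≤ e x}}, fun q => ?_, fun q a ha b hb hab => ?_, ?_⟩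
  · have hF := measurable_kernel_apply_prodMk_left κ hφ (t := {p : α × α | e p.2 < e p.1})
      (measurableSet_lt (by fun_prop) (by fun_prop))
    have hG := measurable_kernel_apply_prodMk_left κ hφ (t := {p : α × α | e p.2 ≤ e p.1})
      (measurableSet_le (by fun_prop) (by fun_prop))
    exact (measurableSet_lt hF measurable_const).inter (measurableSet_le measurable_const hG)
  · rw [mem_ofPred_eq, ← hab] at hb
    exact subsingleton_setOf_measure_lt_le (κ (φ a)) he.injective _ ha hb
  · filter_upwards [ae_condDistrib_singleton_ne_zero μ hφ hfib] with x hx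
    exact exists_rat_measure_lt_le (κ (φ x)) e hx

end CondDistrib

section Involution

variable {X : Type*} [MeasurableSpace X] [StandardBorelSpace X]

theorem exists_measurable_leftInvOn {E : Set X} (hE : MeasurableSet E) {φ : X → X}
    (hφ : Measurable φ) (hinj : InjOn φ E) : ∃ σ : X → X, Measurable σ ∧ LeftInvOn σ φ E := by
  have := hE.standardBorel
  have hemb : MeasurableEmbedding (E.domRestrict φ) :=
    (hφ.comp measurable_subtype_coe).measurableEmbedding hinj.injective
  obtain ⟨σ, hσ, hσφ⟩ := hemb.exists_measurable_extend measurable_subtype_coe fun x => ⟨x⟩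
  exact ⟨σ, hσ, fun x hx => congrFun hσφ ⟨x, hx⟩⟩

theorem exists_measurableEquiv_swap_image {E : Set X} (hE : MeasurableSet E) {φ : X → X}
    (hφ : Measurable φ) (hinj : InjOn φ E) (hdisj : Disjoint E (φ '' E)) :
    ∃ g : X ≃ᵐ X, g ⁻¹' (φ '' E) = E ∧ ∀ x, g x = x ∨ g x = φ x ∨ φ (g x) = x := by
  classical
  obtain ⟨σ, hσ, hσφ⟩ := exists_measurable_leftInvOn hE hφ hinj
  have hσF : ∀ y ∈ φ '' E, σ y ∈ E ∧ φ (σ y) = y := by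
    rintro _ ⟨x, hx, rfl⟩
    rw [hσφ hx]
    exact ⟨hx, rfl⟩
  set g : X → X := fun x => if x ∈ E then φ x else if x ∈ φ '' E then σ x else x with hg
  have hgE : ∀ x ∈ E, g x = φ x := fun x hx => if_pos hx
  have hgF : ∀ y ∈ φ '' E, g y = σ y := fun y hy => by
    simp only [hg, if_neg (disjoint_right.1 hdisj hy), if_pos hy]
  have hgelse : ∀ x ∉ E, x ∉ φ '' E → g x = x := fun x hx hx' => by
    simp only [hg, if_neg hx, if_neg hx']
  have hinv : Involutive g := by
    intro x
    by_cases hx : x ∈ E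
    · rw [hgE x hx, hgF _ (mem_image_of_mem φ hx), hσφ hx]
    by_cases hx' : x ∈ φ '' E
    · rw [hgF x hx', hgE _ (hσF x hx').1, (hσF x hx').2]
    · rw [hgelse x hx hx', hgelse x hx hx']
  have hmeas : Measurable g :=
    hφ.ite hE (hσ.ite (hE.image_of_measurable_injOn hφ hinj) measurable_id)
  refine ⟨.ofInvolutive g hinv hmeas, ?_, fun x => ?_⟩
  · ext x
    simp only [mem_preimage, MeasurableEquiv.ofInvolutive_apply]
    refine ⟨fun hx => ?_, fun hx => hgE x hx ▸ mem_image_of_mem φ hx⟩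
    rw [← hinv x, hgF _ hx]
    exact (hσF _ hx).1
  · simp only [MeasurableEquiv.ofInvolutive_apply]
    by_cases hx : x ∈ E
    · exact .inr (.inl (hgE x hx))
    by_cases hx' : x ∈ φ '' E
    · exact .inr (.inr (hgF x hx' ▸ (hσF x hx').2))
    · exact .inl (hgelse x hx hx')

end Involution

section Nonsingular

variable {X : Type*} [MeasurableSpace X] [StandardBorelSpace X] {μ : Measure X}
  {R : Set (X × X)} {φ : X → X}

theorem measure_image_eq_of_injOn (hrefl : ∀ x, (x, x) ∈ R)
    (hsymm : ∀ ⦃x y⦄, (x, y) ∈ R → (y, x) ∈ R)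
    (hpmp : ∀ f : X ≃ᵐ X, (∀ᵐ x ∂μ, (x, f x) ∈ R) → MeasurePreserving f μ μ)
    (hφ : Measurable φ) (hφR : ∀ x, (x, φ x) ∈ R) {E : Set X} (hE : MeasurableSet E)
    (hinj : InjOn φ E) (hdisj : Disjoint E (φ '' E)) : μ (φ '' E) = μ E := by
  obtain ⟨g, hgE, hg⟩ := exists_measurableEquiv_swap_image hE hφ hinj hdisj
  have hgR : ∀ x, (x, g x) ∈ R := fun x => by
    rcases hg x with h | h | h
    · rw [h]; exact hrefl x
    · rw [h]; exact hφR x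
    · have := hφR (g x); rw [h] at this; exact hsymm this
  have := (hpmp g (ae_of_all μ hgR)).measure_preimage
    (hE.image_of_measurable_injOn hφ hinj).nullMeasurableSet
  rw [hgE] at this
  exact this.symm

theorem quasiMeasurePreserving_of_graph_subset [IsFiniteMeasure μ] (hrefl : ∀ x, (x, x) ∈ R)
    (hsymm : ∀ ⦃x y⦄, (x, y) ∈ R → (y, x) ∈ R) (hcount : ∀ x, {y | (x, y) ∈ R}.Countable)
    (hpmp : ∀ f : X ≃ᵐ X, (∀ᵐ x ∂μ, (x, f x) ∈ R) → MeasurePreserving f μ μ)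
    (hφ : Measurable φ) (hφR : ∀ x, (x, φ x) ∈ R) : Measure.QuasiMeasurePreserving φ μ μ := by
  refine ⟨hφ, .mk fun N hN hN0 => ?_⟩
  rw [Measure.map_apply hφ hN]
  obtain ⟨E, hEm, hinj, hcover⟩ := exists_measurableSet_injOn_cover μ hφ fun y =>
    (hcount y).mono fun x (hx : φ x = y) => hsymm (hx ▸ hφR x)
  set W := φ ⁻¹' N \ N
  have hWE : ∀ q, μ (W ∩ E q) = 0 := fun q => by
    have hdisj : Disjoint (W ∩ E q) (φ '' (W ∩ E q)) := by
      rw [disjoint_left]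
      rintro _ hx ⟨y, hy, rfl⟩
      exact hx.1.2 hy.1.1
    rw [← measure_image_eq_of_injOn hrefl hsymm hpmp hφ hφR (((hφ hN).diff hN).inter (hEm q))
      ((hinj q).mono inter_subset_right) hdisj]
    exact measure_mono_null (image_subset_iff.2 fun x hx => hx.1.1) hN0
  have hW : μ W = 0 :=
    measure_mono_null (fun x hx => by by_cases h : ∃ q, x ∈ E q <;> simp_all [W])
      (measure_union_null (measure_iUnion_null hWE) (ae_iff.1 hcover))
  have hsub : φ ⁻¹' N ⊆ W ∪ N := by
    rw [sdiff_union_self]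
    exact subset_union_left
  exact measure_mono_null hsub (measure_union_null hW hN0)

end Nonsingular

section Compression

variable {X : Type*} {Y : Set X} {S : Set (X × X)} {φ : X → X} {A : Set X}

theorem preimage_inter_eq_of_saturated (hφY : ∀ x, φ x ∈ Y) (hφfix : ∀ y ∈ Y, φ y = y)
    (hSrefl : ∀ y ∈ Y, (y, y) ∈ S) (hA : ∀ x ∈ A, ∀ y, (φ x, φ y) ∈ S → y ∈ A) :
    φ ⁻¹' (A ∩ Y) = A := by
  have hS : ∀ x, (φ (φ x), φ x) ∈ S ∧ (φ x, φ (φ x)) ∈ S := fun x => by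
    rw [hφfix _ (hφY x)]
    exact ⟨hSrefl _ (hφY x), hSrefl _ (hφY x)⟩
  ext x
  exact ⟨fun hx => hA (φ x) hx.1 x (hS x).1, fun hx => ⟨hA x hx (φ x) (hS x).2, hφY x⟩⟩

theorem inter_saturated_of_saturated (hSY : ∀ ⦃x y⦄, (x, y) ∈ S → y ∈ Y)
    (hφfix : ∀ y ∈ Y, φ y = y) (hA : ∀ x ∈ A, ∀ y, (φ x, φ y) ∈ S → y ∈ A) :
    ∀ x ∈ A ∩ Y, ∀ y, (x, y) ∈ S → y ∈ A ∩ Y := by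
  intro x hx y hxy
  have hy := hSY hxy
  exact ⟨hA x hx.1 y (by rwa [hφfix x hx.2, hφfix y hy]), hy⟩

end Compression

theorem compression_extension_ergodic_general
    {X : Type} [MeasurableSpace X] [StandardBorelSpace X]
    (μ : Measure X) [IsProbabilityMeasure μ]
    (R : Set (X × X))
    (hrefl : ∀ x, (x, x) ∈ R)
    (hsymm : ∀ ⦃x y⦄, (x, y) ∈ R → (y, x) ∈ R)
    (hcount : ∀ x, {y | (x, y) ∈ R}.Countable)
    (hpmp : ∀ f : X ≃ᵐ X, (∀ᵐ x ∂μ, (x, f x) ∈ R) → MeasurePreserving f μ μ)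
    (Y : Set X) (hYmeas : MeasurableSet Y)
    (S : Set (X × X))
    (hSsub : S ⊆ R ∩ Y ×ˢ Y)
    (hSrefl : ∀ y ∈ Y, (y, y) ∈ S)
    (hSerg : ∀ A : Set X, A ⊆ Y → MeasurableSet A →
      (∀ x ∈ A, ∀ y, (x, y) ∈ S → y ∈ A) → μ A = 0 ∨ μ A = μ Y)
    (φ : X → X) (hφmeas : Measurable φ)
    (hφY : ∀ x, φ x ∈ Y) (hφR : ∀ x, (x, φ x) ∈ R)
    (hφfix : ∀ y ∈ Y, φ y = y) :
    IsErgodicRel μ {p : X × X | (φ p.1, φ p.2) ∈ S} := by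
  intro A hA hAsat
  have hφ := quasiMeasurePreserving_of_graph_subset hrefl hsymm hcount hpmp hφmeas hφR
  have hAeq : φ ⁻¹' (A ∩ Y) = A := preimage_inter_eq_of_saturated hφY hφfix hSrefl hAsat
  rcases hSerg (A ∩ Y) inter_subset_right (hA.inter hYmeas)
    (inter_saturated_of_saturated (fun _ _ h => (hSsub h).2.2) hφfix hAsat) with h0 | hfull
  · exact .inl (hAeq ▸ hφ.preimage_null h0)
  · have hcompl : Aᶜ = φ ⁻¹' (Y \ (A ∩ Y)) := by
      rw [preimage_sdiff, hAeq, (eq_univ_of_forall hφY : φ ⁻¹' Y = univ), compl_eq_univ_sdiff]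
    have hrest : μ (Y \ (A ∩ Y)) = 0 := by
      rw [measure_sdiff inter_subset_right (hA.inter hYmeas).nullMeasurableSet (measure_ne_top _ _),
        hfull, tsub_self]
    exact .inr ((prob_compl_eq_zero_iff hA).1 (hcompl ▸ hφ.preimage_null hrest))

/-- in the setting of the compression lemma, if `S ≤ R_Y` is
ergodic on `(Y, μ|_Y)` then the extension `T = {(x,y) : (φx, φy) ∈ S}` is
ergodic on `(X, μ)`. -/
theorem compression_extension_ergodic
    {X : Type} [MeasurableSpace X] [StandardBorelSpace X]
    (μ : Measure X) [IsProbabilityMeasure μ]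
    (R : Set (X × X)) (hRmeas : MeasurableSet R)
    (hrefl : ∀ x, (x, x) ∈ R)
    (hsymm : ∀ ⦃x y⦄, (x, y) ∈ R → (y, x) ∈ R)
    (htrans : ∀ ⦃x y z⦄, (x, y) ∈ R → (y, z) ∈ R → (x, z) ∈ R)
    (hcount : ∀ x, {y | (x, y) ∈ R}.Countable)
    (hpmp : ∀ f : X ≃ᵐ X, (∀ᵐ x ∂μ, (x, f x) ∈ R) → MeasurePreserving f μ μ)
    (herg : IsErgodicRel μ R)
    (Y : Set X) (hYmeas : MeasurableSet Y) (hYpos : 0 < μ Y)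
    (S : Set (X × X)) (hSmeas : MeasurableSet S)
    (hSsub : S ⊆ R ∩ Y ×ˢ Y)
    (hSrefl : ∀ y ∈ Y, (y, y) ∈ S)
    (hSsymm : ∀ ⦃x y⦄, (x, y) ∈ S → (y, x) ∈ S)
    (hStrans : ∀ ⦃x y z⦄, (x, y) ∈ S → (y, z) ∈ S → (x, z) ∈ S)
    (hSerg : ∀ A : Set X, A ⊆ Y → MeasurableSet A →
      (∀ x ∈ A, ∀ y, (x, y) ∈ S → y ∈ A) → μ A = 0 ∨ μ A = μ Y)
    (φ : X → X) (hφmeas : Measurable φ)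
    (hφY : ∀ x, φ x ∈ Y) (hφR : ∀ x, (x, φ x) ∈ R)
    (hφfix : ∀ y ∈ Y, φ y = y) :
    IsErgodicRel μ {p : X × X | (φ p.1, φ p.2) ∈ S} :=
  compression_extension_ergodic_general μ R hrefl hsymm hcount hpmp Y hYmeas S hSsub hSrefl hSerg φ
    hφmeas hφY hφR hφfix
end

section
/- Let G be a countably infinite group acting essentially freely, ergodically, and measure-preservingly on a nonatomic standard probability space (X,μ), let H be a countable group, ρ : G → H an injective homomorphism, and φ : X → H a Borel map. Define the cocycle c(g,x) = φ(gx)⁻¹ρ(g)φ(x) on the orbit equivalence relation. Then the subequivalence relation N = {(gx, x) : c(g,x) = e} (the kernel of c) has finite classes almost everywhere, and in particular N is not ergodic. -/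
/-!
For fixed `h`, the translates `g • X_{g,h}` of the sets
`X_{g,h} = {x | φ x = h ∧ φ (g • x) = ρ g * h}` (`kernelSlice`) lie in the level sets
`{φ = ρ g * h}`, which are pairwise disjoint because `ρ` is injective. Hence
`∑_g μ X_{g,h} ≤ 1`, and by Borel–Cantelli almost every `x` lies in only finitely many
`X_{g, φ x}`; these `g` are exactly the ones with `g • x` in the kernel class of `x`.

For non-ergodicity, the saturation of a set `B ⊆ {φ = h}` has measure at most
`∑_g μ (B ∩ X_{g,h}) = ∫⁻ x in B, ∑_g 1_{X_{g,h}} x`, which by absolute continuity of the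
integral is small when `μ B` is small. A nonatomic measure on a countably separated space
has sets of arbitrarily small positive measure inside `{φ = h}`, so some saturation has
measure strictly between `0` and `1`.
-/

open MeasureTheory

open Filter Function Topology
open scoped ENNReal Pointwise

section Nonatomic

variable {X : Type*} [MeasurableSpace X]

open Classical in
noncomputable def refineAlong (μ : Measure X) (S : ℕ → Set X) (A : Set X) : ℕ → Set X
  | 0 => A
  | n + 1 =>
    refineAlong μ S A n ∩ if μ (refineAlong μ S A n ∩ S n) = 0 then (S n)ᶜ else S n

variable (μ : Measure X) {S : ℕ → Set X} {A : Set X}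

theorem refineAlong_antitone : Antitone (refineAlong μ S A) :=
  antitone_nat_of_succ_le fun _ => Set.inter_subset_left

theorem measurableSet_refineAlong (hS : ∀ n, MeasurableSet (S n)) (hA : MeasurableSet A) (n : ℕ) :
    MeasurableSet (refineAlong μ S A n) := by
  induction n with
  | zero => exact hA
  | succ n ih =>
    refine ih.inter ?_
    split_ifs
    exacts [(hS n).compl, hS n]

theorem measure_refineAlong_ne_zero (hA : μ A ≠ 0) (n : ℕ) : μ (refineAlong μ S A n) ≠ 0 := by
  induction n with
  | zero => exact hA
  | succ n ih =>
    simp only [refineAlong]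
    split_ifs with h
    · rwa [← Set.sdiff_eq, measure_sdiff_null' h]
    · exact h

theorem subsingleton_iInter_refineAlong
    (hsep : ∀ x y, (∀ n, x ∈ S n ↔ y ∈ S n) → x = y) :
    (⋂ n, refineAlong μ S A n).Subsingleton := by
  intro x hx y hy
  refine hsep x y fun n => ?_
  have hxn := (Set.mem_iInter.mp hx (n + 1)).2
  have hyn := (Set.mem_iInter.mp hy (n + 1)).2
  split_ifs at hxn hyn
  exacts [iff_of_false hxn hyn, iff_of_true hxn hyn]

variable [MeasurableSpace.CountablySeparated X] [IsFiniteMeasure μ] [NullSingletonClass μ]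

theorem exists_subset_measure_ne_zero_lt (hA : MeasurableSet A) (hA0 : μ A ≠ 0)
    {ε : ℝ≥0∞} (hε : ε ≠ 0) :
    ∃ B ⊆ A, MeasurableSet B ∧ μ B ≠ 0 ∧ μ B < ε := by
  obtain ⟨S, hS, hsep⟩ := exists_seq_separating X MeasurableSet.empty Set.univ
  -- The cells `refineAlong μ S A n` keep positive measure but shrink to a subsingleton.
  have hlim : Tendsto (fun n => μ (refineAlong μ S A n)) atTop (𝓝 0) := by
    rw [← (subsingleton_iInter_refineAlong μ fun x y => hsep x trivial y trivial).measure_zero μ]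
    exact tendsto_measure_iInter_atTop
      (fun n => (measurableSet_refineAlong μ hS hA n).nullMeasurableSet)
      (refineAlong_antitone μ) ⟨0, measure_ne_top μ _⟩
  obtain ⟨n, hn⟩ := (hlim.eventually (gt_mem_nhds (pos_iff_ne_zero.mpr hε))).exists
  exact ⟨_, refineAlong_antitone μ (Nat.zero_le n), measurableSet_refineAlong μ hS hA n,
    measure_refineAlong_ne_zero μ hA0 n, hn⟩

theorem exists_subset_measure_ne_zero_tsum_inter_lt {ι : Type*} [Countable ι] {f : ι → Set X}
    (hf : ∀ i, MeasurableSet (f i)) (hsum : ∑' i, μ (f i) ≠ ∞)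
    (hA : MeasurableSet A) (hA0 : μ A ≠ 0) {ε : ℝ≥0∞} (hε : ε ≠ 0) :
    ∃ B ⊆ A, MeasurableSet B ∧ μ B ≠ 0 ∧ ∑' i, μ (B ∩ f i) < ε := by
  have hsum_eq : ∀ ν : Measure X, ∫⁻ x, ∑' i, (f i).indicator 1 x ∂ν = ∑' i, ν (f i) := fun ν => by
    rw [lintegral_tsum fun i => (measurable_one.indicator (hf i)).aemeasurable]
    simp_rw [lintegral_indicator_one (hf _)]
  obtain ⟨δ, hδ, hsmall⟩ := exists_pos_setLIntegral_lt_of_measure_lt ((hsum_eq μ).trans_ne hsum) hε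
  obtain ⟨B, hBA, hB, hB0, hBδ⟩ := exists_subset_measure_ne_zero_lt μ hA hA0 hδ.ne'
  refine ⟨B, hBA, hB, hB0, ?_⟩
  simpa only [hsum_eq, Measure.restrict_apply (hf _), Set.inter_comm] using hsmall B hBδ

end Nonatomic

section CocycleKernel

variable {X G H : Type*} [Group G] [MulAction G X] [Group H] (ρ : G →* H) (φ : X → H)

def kernelSlice (g : G) (h : H) : Set X := {x | φ x = h ∧ φ (g • x) = ρ g * h}

def cocycleKernel : Set (X × X) :=
  {p | ∃ g : G, p.1 = g • p.2 ∧ (φ (g • p.2))⁻¹ * ρ g * φ p.2 = 1}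

variable {ρ φ}

theorem mem_cocycleKernel_iff {x y : X} :
    (x, y) ∈ cocycleKernel ρ φ ↔ ∃ g : G, x = g • y ∧ φ (g • y) = ρ g * φ y := by
  simp only [cocycleKernel, Set.mem_ofPred_eq, mul_assoc, inv_mul_eq_one]

theorem cocycleKernel_trans {x y z : X} (hxy : (x, y) ∈ cocycleKernel ρ φ)
    (hyz : (y, z) ∈ cocycleKernel ρ φ) : (x, z) ∈ cocycleKernel ρ φ := by
  obtain ⟨g, rfl, hg⟩ := mem_cocycleKernel_iff.mp hxy
  obtain ⟨k, rfl, hk⟩ := mem_cocycleKernel_iff.mp hyz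
  refine mem_cocycleKernel_iff.mpr ⟨g * k, (mul_smul ..).symm, ?_⟩
  rw [mul_smul, hg, hk, map_mul, mul_assoc]

theorem cocycleKernel_refl (x : X) : (x, x) ∈ cocycleKernel ρ φ :=
  mem_cocycleKernel_iff.mpr ⟨1, (one_smul G x).symm, by simp⟩

theorem cocycleKernel_class_subset_image (x : X) :
    {y | (y, x) ∈ cocycleKernel ρ φ} ⊆ (· • x) '' {g : G | x ∈ kernelSlice ρ φ g (φ x)} := by
  intro y hy
  obtain ⟨g, rfl, hg⟩ := mem_cocycleKernel_iff.mp hy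
  exact ⟨g, ⟨rfl, hg⟩, rfl⟩

theorem pairwise_disjoint_smul_kernelSlice (hρ : Function.Injective ρ) (h : H) :
    Pairwise (Disjoint on fun g : G => g • kernelSlice ρ φ g h) := by
  intro g₁ g₂ hne
  refine Set.disjoint_left.mpr ?_
  rintro _ ⟨x₁, hx₁, rfl⟩ ⟨x₂, hx₂, hx⟩
  refine hne (hρ (mul_right_cancel (b := h) ?_))
  rw [← hx₁.2, ← hx₂.2]
  exact congrArg φ hx.symm

theorem measure_cocycleKernel_saturation_le [Countable G] [MeasurableSpace X] (μ : Measure X)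
    [SMulInvariantMeasure G X μ] {B : Set X} {h : H} (hBh : B ⊆ {x | φ x = h}) :
    μ {y | ∃ x ∈ B, (x, y) ∈ cocycleKernel ρ φ} ≤ ∑' g : G, μ (B ∩ kernelSlice ρ φ g h) := by
  have : {y | ∃ x ∈ B, (x, y) ∈ cocycleKernel ρ φ} ⊆ ⋃ g : G, g • (B ∩ kernelSlice ρ φ g h) := by
    rintro y ⟨x, hx, hxy⟩
    obtain ⟨g, rfl, hg⟩ := mem_cocycleKernel_iff.mp hxy
    refine Set.mem_iUnion.mpr ⟨g⁻¹, g • y, ⟨hx, hBh hx, ?_⟩, inv_smul_smul g y⟩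
    rw [inv_smul_smul, map_inv, eq_inv_mul_iff_mul_eq, ← hg]
    exact hBh hx
  calc _ ≤ μ (⋃ g : G, g • (B ∩ kernelSlice ρ φ g h)) := measure_mono this
    _ ≤ ∑' g : G, μ (g • (B ∩ kernelSlice ρ φ g h)) := measure_iUnion_le _
    _ = ∑' g : G, μ (B ∩ kernelSlice ρ φ g h) := by simp only [measure_smul]

variable [MeasurableSpace X] [MeasurableConstSMul G X]
  (hφ : ∀ h : H, MeasurableSet {x | φ x = h})
include hφ

theorem measurableSet_kernelSlice (g : G) (h : H) : MeasurableSet (kernelSlice ρ φ g h) :=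
  (hφ h).inter (measurable_const_smul g (hφ (ρ g * h)))

theorem measurableSet_cocycleKernel_saturation [Countable G] [Countable H] {B : Set X}
    (hB : MeasurableSet B) : MeasurableSet {y | ∃ x ∈ B, (x, y) ∈ cocycleKernel ρ φ} := by
  have : {y | ∃ x ∈ B, (x, y) ∈ cocycleKernel ρ φ} =
      ⋃ (g : G) (h : H), (g • ·) ⁻¹' B ∩ kernelSlice ρ φ g h := by
    ext y
    simp only [mem_cocycleKernel_iff, kernelSlice, Set.mem_ofPred_eq, Set.mem_iUnion,
      Set.mem_inter_iff, Set.mem_preimage]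
    constructor
    · rintro ⟨_, hx, g, rfl, hg⟩
      exact ⟨g, φ y, hx, rfl, hg⟩
    · rintro ⟨g, _, hx, rfl, hg⟩
      exact ⟨_, hx, g, rfl, hg⟩
  rw [this]
  exact .iUnion fun g => .iUnion fun h =>
    (measurable_const_smul g hB).inter (measurableSet_kernelSlice hφ g h)

variable (μ : Measure X) [SMulInvariantMeasure G X μ]

theorem tsum_measure_kernelSlice_le (hρ : Function.Injective ρ) (h : H) :
    ∑' g : G, μ (kernelSlice ρ φ g h) ≤ μ Set.univ :=
  calc ∑' g : G, μ (kernelSlice ρ φ g h) = ∑' g : G, μ (g • kernelSlice ρ φ g h) := by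
        simp only [measure_smul]
    _ ≤ μ (⋃ g : G, g • kernelSlice ρ φ g h) :=
        tsum_meas_le_meas_iUnion_of_disjoint μ
          (fun g => (measurableSet_kernelSlice hφ g h).const_smul g)
          (pairwise_disjoint_smul_kernelSlice hρ h)
    _ ≤ μ Set.univ := measure_mono (Set.subset_univ _)

variable [Countable G] [Countable H] [IsFiniteMeasure μ]

theorem ae_finite_cocycleKernel_class (hρ : Function.Injective ρ) :
    ∀ᵐ x ∂μ, {y | (y, x) ∈ cocycleKernel ρ φ}.Finite := by
  have hfinite_slices : ∀ᵐ x ∂μ, ∀ h : H, {g : G | x ∈ kernelSlice ρ φ g h}.Finite :=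
    ae_all_iff.mpr fun h => ae_finite_setOfPred_mem
      ((tsum_measure_kernelSlice_le hφ μ hρ h).trans_lt (measure_lt_top μ _)).ne
  filter_upwards [hfinite_slices] with x hx
  exact ((hx (φ x)).image _).subset (cocycleKernel_class_subset_image x)

theorem exists_cocycleKernel_closed_measure_ne_zero_lt [MeasurableSpace.CountablySeparated X]
    [NullSingletonClass μ] [NeZero μ] (hρ : Function.Injective ρ) {ε : ℝ≥0∞} (hε : ε ≠ 0) :
    ∃ A : Set X, MeasurableSet A ∧ (∀ x ∈ A, ∀ y, (x, y) ∈ cocycleKernel ρ φ → y ∈ A) ∧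
      μ A ≠ 0 ∧ μ A < ε := by
  obtain ⟨h, hh⟩ : ∃ h : H, μ {x | φ x = h} ≠ 0 := by
    by_contra! hnull
    refine NeZero.ne μ (Measure.measure_univ_eq_zero.mp (measure_mono_null ?_ (measure_iUnion_null hnull)))
    exact fun x _ => Set.mem_iUnion.mpr ⟨φ x, rfl⟩
  obtain ⟨B, hBh, hB, hB0, hBε⟩ := exists_subset_measure_ne_zero_tsum_inter_lt μ
    (measurableSet_kernelSlice hφ · h)
    ((tsum_measure_kernelSlice_le hφ μ hρ h).trans_lt (measure_lt_top μ _)).ne (hφ h) hh hε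
  have hBsat : B ⊆ {y | ∃ x ∈ B, (x, y) ∈ cocycleKernel ρ φ} :=
    fun x hx => ⟨x, hx, cocycleKernel_refl x⟩
  refine ⟨_, measurableSet_cocycleKernel_saturation hφ hB, ?_,
    fun h0 => hB0 (measure_mono_null hBsat h0),
    (measure_cocycleKernel_saturation_le μ hBh).trans_lt hBε⟩
  rintro _ ⟨b, hb, hbx⟩ _ hxy
  exact ⟨b, hb, cocycleKernel_trans hbx hxy⟩

end CocycleKernel

theorem kernel_of_injective_untwisted_cocycle_finite_general
    {X : Type} [MeasurableSpace X] [StandardBorelSpace X]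
    (μ : Measure X) [IsProbabilityMeasure μ] [NullSingletonClass μ]
    (G : Type) [Group G] [Countable G] [MulAction G X]
    (hmp : ∀ g : G, MeasurePreserving (fun x : X => g • x) μ μ)
    (H : Type) [Group H] [Countable H]
    (ρ : G →* H) (hρ : Function.Injective ρ)
    (φ : X → H) (hφmeas : ∀ h : H, MeasurableSet {x | φ x = h}) :
    (∀ᵐ x ∂μ,
      {y | ∃ g : G, y = g • x ∧ (φ (g • x))⁻¹ * ρ g * φ x = 1}.Finite) ∧
    ¬ IsErgodicRel μ
      {p : X × X | ∃ g : G, p.1 = g • p.2 ∧ (φ (g • p.2))⁻¹ * ρ g * φ p.2 = 1} := by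
  have : MeasurableConstSMul G X := ⟨fun g => (hmp g).measurable⟩
  have : SMulInvariantMeasure G X μ :=
    ⟨fun g _ hs => (hmp g).measure_preimage hs.nullMeasurableSet⟩
  refine ⟨ae_finite_cocycleKernel_class hφmeas μ hρ, fun hErg => ?_⟩
  obtain ⟨A, hA, hA_closed, hA0, hA1⟩ :=
    exists_cocycleKernel_closed_measure_ne_zero_lt hφmeas μ hρ one_ne_zero
  exact (hErg A hA hA_closed).elim hA0 hA1.ne

/-- let a countably infinite group `G` act essentially freely,
ergodically and p.m.p. on a nonatomic probability space, `ρ : G → H` an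
injective homomorphism into a countable group, `φ : X → H` Borel, and
`c(g,x) = φ(gx)⁻¹ ρ(g) φ(x)`.  Then the kernel
`N = {(gx, x) : c(g,x) = e}` has finite classes a.e.; in particular `N` is not
ergodic. -/
theorem kernel_of_injective_untwisted_cocycle_finite
    {X : Type} [MeasurableSpace X] [StandardBorelSpace X]
    (μ : Measure X) [IsProbabilityMeasure μ] [NullSingletonClass μ]
    (G : Type) [Group G] [Countable G] [Infinite G] [MulAction G X]
    (hmeas : ∀ g : G, Measurable fun x : X => g • x)
    (hmp : ∀ g : G, MeasurePreserving (fun x : X => g • x) μ μ)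
    (hfree : ∀ᵐ x ∂μ, ∀ g : G, g • x = x → g = 1)
    (hergodic : ∀ A : Set X, MeasurableSet A →
      (∀ (g : G) (x : X), x ∈ A → g • x ∈ A) → μ A = 0 ∨ μ A = 1)
    (H : Type) [Group H] [Countable H]
    (ρ : G →* H) (hρ : Function.Injective ρ)
    (φ : X → H) (hφmeas : ∀ h : H, MeasurableSet {x | φ x = h}) :
    (∀ᵐ x ∂μ,
      {y | ∃ g : G, y = g • x ∧ (φ (g • x))⁻¹ * ρ g * φ x = 1}.Finite) ∧
    ¬ IsErgodicRel μ
      {p : X × X | ∃ g : G, p.1 = g • p.2 ∧ (φ (g • p.2))⁻¹ * ρ g * φ p.2 = 1} :=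
  kernel_of_injective_untwisted_cocycle_finite_general μ G hmp H ρ hρ φ hφmeas
end

section
/- Let G be a countably infinite group with no nontrivial finite quotients, acting essentially freely, ergodically, and pmp on (X,μ) with orbit equivalence relation R, and suppose the action is cocycle superrigid. Then R has no proper finite-index ergodic normal subequivalence relation; combined with the reduction from finite-index ergodic subrelations to normal ones, R has no proper finite-index ergodic subequivalence relation at all. -/
/-!
Enumerate `G` as `u 0 = 1, u 1, …`. At a point `x`, the `S`-classes in the orbit of `x` are the
classes of `a ~ b ↔ (a • x, b • x) ∈ S` on `G`; numbering each class by the rank of its least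
enumeration index labels them measurably by `0, …, n - 1`, where the index `n` is a.e.
constant by ergodicity. Transporting labels along the action gives a cocycle into the finite
group `Perm (Fin n)`. Superrigidity makes it cohomologous to a homomorphism, which is trivial
because `G` has no nontrivial finite quotients; so the cocycle is a coboundary
`(φ (g • x))⁻¹ * φ x`. As `1` has label `0`, this says `φ (g • x) 0 = φ x 0` exactly when
`(g • x, x) ∈ S`. Hence `x ↦ φ x 0` is `S`-invariant, so a.e. constant by ergodicity of `S`,
and then every point in the orbit of a.e. `x` is `S`-related to `x`.
-/

open MeasureTheory

theorem exists_surjective_nat_zero_eq {α : Type*} [Countable α] (a : α) :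
    ∃ u : ℕ → α, Function.Surjective u ∧ u 0 = a := by
  have : Nonempty α := ⟨a⟩
  obtain ⟨f, hf⟩ := exists_surjective_nat α
  exact ⟨fun k => Nat.casesOn k a f, fun b => let ⟨k, hk⟩ := hf b; ⟨k + 1, hk⟩, rfl⟩

theorem MonoidHom.eq_one_of_forall_finite_quotient {G H : Type} [Group G] [Group H] [Finite H]
    (hG : ∀ (Q : Type) [Group Q] [Finite Q], ∀ f : G →* Q, Function.Surjective f → ∀ g, f g = 1)
    (ρ : G →* H) : ρ = 1 :=
  MonoidHom.ext fun g =>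
    congrArg Subtype.val (hG ρ.range ρ.rangeRestrict ρ.rangeRestrict_surjective g)

theorem measurable_sInf_nat {X : Type*} [MeasurableSpace X] {P : ℕ → X → Prop}
    (hP : ∀ k, MeasurableSet {x | P k x}) (hex : ∀ x, ∃ k, P k x) :
    Measurable fun x => sInf {k | P k x} := by
  classical
  have : (fun x => sInf {k | P k x}) = fun x => Nat.find (hex x) :=
    funext fun x => Nat.sInf_def (hex x)
  rw [this]
  exact measurable_find hex hP

theorem measurable_count {X : Type*} [MeasurableSpace X] {P : X → ℕ → Prop}
    [∀ x, DecidablePred (P x)] (hP : ∀ k, MeasurableSet {x | P x k}) (m : ℕ) :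
    Measurable fun x => Nat.count (P x) m := by
  induction m with
  | zero => simp only [Nat.count_zero, measurable_const]
  | succ m ih =>
    simp only [Nat.count_succ]
    exact ih.add (Measurable.ite (hP m) measurable_const measurable_const)

theorem measurableSet_eq_inv_mul {X H : Type*} [MeasurableSpace X] [Group H] [Countable H]
    {c f₁ f₂ : X → H} (hc : ∀ h, MeasurableSet {x | c x = h})
    (hf₁ : ∀ h, MeasurableSet {x | f₁ x = h}) (hf₂ : ∀ h, MeasurableSet {x | f₂ x = h}) :
    MeasurableSet {x | c x = (f₁ x)⁻¹ * f₂ x} := by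
  have : {x | c x = (f₁ x)⁻¹ * f₂ x} =
      ⋃ (h₁ : H) (h₂ : H), {x | f₁ x = h₁} ∩ {x | f₂ x = h₂} ∩ {x | c x = h₁⁻¹ * h₂} := by
    ext x
    simp
  rw [this]
  exact .iUnion fun h₁ => .iUnion fun h₂ => ((hf₁ h₁).inter (hf₂ h₂)).inter (hc _)

theorem ae_forall_smul {X G : Type*} [MeasurableSpace X] [SMul G X] [Countable G] {μ : Measure X}
    (hmp : ∀ g : G, MeasurePreserving (g • ·) μ μ) {P : X → Prop} (h : ∀ᵐ x ∂μ, P x) :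
    ∀ᵐ x ∂μ, ∀ g : G, P (g • x) :=
  ae_all_iff.2 fun g => (hmp g).quasiMeasurePreserving.ae h

theorem IsErgodicRel.exists_ae_eq {X : Type} [MeasurableSpace X] {μ : Measure X}
    [IsProbabilityMeasure μ] {S : Set (X × X)} {ι : Type*} [Countable ι] (hS : IsErgodicRel μ S)
    {E : Set X} {ψ : X → ι} (hE : ∀ᵐ x ∂μ, x ∈ E) (hψ : ∀ i, MeasurableSet (E ∩ ψ ⁻¹' {i}))
    (hinv : ∀ x ∈ E, ∀ y, (x, y) ∈ S → y ∈ E ∧ ψ y = ψ x) :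
    ∃ i, ∀ᵐ x ∂μ, x ∈ E ∧ ψ x = i := by
  by_contra h
  have hnull : ∀ i, μ (E ∩ ψ ⁻¹' {i}) = 0 := fun i =>
    (hS _ (hψ i) fun x hx y hxy => ⟨(hinv x hx.1 y hxy).1, (hinv x hx.1 y hxy).2.trans hx.2⟩)
      |>.resolve_right fun h1 =>
        h ⟨i, (ae_mem_iff_measure_eq (hψ i).nullMeasurableSet).2 (h1.trans measure_univ.symm)⟩
  obtain ⟨x, hxE, hx⟩ :=
    (hE.and (measure_eq_zero_iff_ae_notMem.1 (measure_iUnion_null hnull))).exists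
  exact hx (Set.mem_iUnion.2 ⟨ψ x, hxE, rfl⟩)

section Labelling

variable {α : Type*} (r : Setoid α) (u : ℕ → α)

noncomputable def firstIndex (a : α) : ℕ := sInf {k | r (u k) a}

def IsFirstIndex (k : ℕ) : Prop := firstIndex r u (u k) = k

open Classical in
noncomputable def classLabel (a : α) : ℕ := Nat.count (IsFirstIndex r u) (firstIndex r u a)

variable {r u} (hu : Function.Surjective u)
include hu

theorem firstIndex_spec (a : α) : r (u (firstIndex r u a)) a := by
  obtain ⟨k, rfl⟩ := hu a
  exact Nat.sInf_mem (s := {k' | r (u k') (u k)}) ⟨k, r.refl _⟩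

theorem firstIndex_eq_iff {a b : α} : firstIndex r u a = firstIndex r u b ↔ r a b := by
  refine ⟨fun h => ?_, fun h => ?_⟩
  · exact r.trans (r.symm (h ▸ firstIndex_spec hu a)) (firstIndex_spec hu b)
  · unfold firstIndex
    congr 1
    ext k
    exact ⟨fun hk => r.trans hk h, fun hk => r.trans hk (r.symm h)⟩

theorem isFirstIndex_firstIndex (a : α) : IsFirstIndex r u (firstIndex r u a) :=
  (firstIndex_eq_iff hu).2 (firstIndex_spec hu a)

theorem classLabel_eq_iff {a b : α} : classLabel r u a = classLabel r u b ↔ r a b := by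
  classical
  rw [← firstIndex_eq_iff hu]
  exact ⟨Nat.count_injective (isFirstIndex_firstIndex hu a) (isFirstIndex_firstIndex hu b),
    fun h => by rw [classLabel, classLabel, h]⟩

omit hu in
theorem classLabel_zero : classLabel r u (u 0) = 0 := by
  have : firstIndex r u (u 0) = 0 := Nat.eq_zero_of_le_zero (Nat.sInf_le (r.refl _))
  rw [classLabel, this, Nat.count_zero]

theorem bijective_mk_firstIndex :
    Function.Bijective fun k : {k // IsFirstIndex r u k} => (⟦u k⟧ : Quotient r) := by
  refine ⟨fun k l h => Subtype.ext ?_, fun q => ?_⟩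
  · rw [← k.2, ← l.2]
    exact (firstIndex_eq_iff hu).2 (Quotient.exact h)
  · induction q using Quotient.inductionOn with
    | h a => exact ⟨⟨_, isFirstIndex_firstIndex hu a⟩, Quotient.sound (firstIndex_spec hu a)⟩

theorem range_classLabel [Finite (Quotient r)] :
    Set.range (classLabel r u) = Set.Iio (Nat.card (Quotient r)) := by
  classical
  have hfin : (Set.ofPred (IsFirstIndex r u)).Finite :=
    Set.finite_coe_iff.1 (Finite.of_injective _ (bijective_mk_firstIndex hu).1)
  have hcard : hfin.toFinset.card = Nat.card (Quotient r) := by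
    rw [← Nat.card_eq_card_finite_toFinset]
    exact Nat.card_eq_of_bijective _ (bijective_mk_firstIndex hu)
  ext j
  rw [Set.mem_Iio, ← hcard]
  constructor
  · rintro ⟨a, rfl⟩
    exact Nat.count_lt_card hfin (isFirstIndex_firstIndex hu a)
  · intro hj
    have hnew := Nat.nth_mem_of_lt_card hfin hj
    refine ⟨u (Nat.nth (IsFirstIndex r u) j), ?_⟩
    rw [classLabel, hnew, Nat.count_nth_of_lt_card_finite hfin hj]

theorem card_quotient_eq_iff_range_classLabel {n : ℕ} (hn : n ≠ 0) :
    Nat.card (Quotient r) = n ↔ Set.range (classLabel r u) = Set.Iio n := by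
  refine ⟨fun h => ?_, fun h => ?_⟩
  · have : Finite (Quotient r) := Nat.finite_of_card_ne_zero (h ▸ hn)
    rw [range_classLabel hu, h]
  · have hker : Setoid.ker (classLabel r u) = r := Setoid.ext fun a b => by
      rw [Setoid.ker_def, classLabel_eq_iff hu]
    rw [← hker, Nat.card_congr (Setoid.quotientKerEquivRange _), h]
    simp

end Labelling

section IndexCocycle

variable {X G : Type*} [Group G] [MulAction G X] (σ : Setoid X) (u : ℕ → G)

noncomputable def orbitLabel (x : X) : G → ℕ := classLabel (σ.comap (· • x)) u

variable (G) in
noncomputable def orbitIndex (x : X) : ℕ := Nat.card (Quotient (σ.comap fun g : G => g • x))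

noncomputable def labelShift (g : G) (x : X) : ℕ → ℕ :=
  Function.extend (orbitLabel σ u x) (fun a => orbitLabel σ u (g • x) (a * g⁻¹)) id

theorem orbitIndex_smul (g : G) (x : X) : orbitIndex G σ (g • x) = orbitIndex G σ x :=
  Nat.card_congr <| Quotient.congr (Equiv.mulRight g) fun a b => by
    simp only [Setoid.comap_rel, Equiv.coe_mulRight, mul_smul]

variable {σ u}

theorem orbitLabel_one (hu₀ : u 0 = 1) (x : X) : orbitLabel σ u x 1 = 0 :=
  hu₀ ▸ classLabel_zero

variable (hu : Function.Surjective u)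
include hu

theorem orbitLabel_eq_iff {x : X} {a b : G} :
    orbitLabel σ u x a = orbitLabel σ u x b ↔ σ (a • x) (b • x) :=
  classLabel_eq_iff hu

theorem orbitIndex_eq_iff_range_orbitLabel {x : X} {n : ℕ} (hn : n ≠ 0) :
    orbitIndex G σ x = n ↔ Set.range (orbitLabel σ u x) = Set.Iio n :=
  card_quotient_eq_iff_range_classLabel hu hn

theorem orbitLabel_lt {x : X} {n : ℕ} [NeZero n] (hx : orbitIndex G σ x = n) (a : G) :
    orbitLabel σ u x a < n := by
  rw [orbitIndex_eq_iff_range_orbitLabel hu (NeZero.ne n)] at hx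
  simpa [hx] using Set.mem_range_self (f := orbitLabel σ u x) a

theorem exists_orbitLabel_eq {x : X} {n : ℕ} [NeZero n] (hx : orbitIndex G σ x = n) {j : ℕ}
    (hj : j < n) : ∃ a, orbitLabel σ u x a = j := by
  rw [orbitIndex_eq_iff_range_orbitLabel hu (NeZero.ne n)] at hx
  rw [← Set.mem_range, hx]
  exact hj

theorem labelShift_orbitLabel (g : G) (x : X) (a : G) :
    labelShift σ u g x (orbitLabel σ u x a) = orbitLabel σ u (g • x) (a * g⁻¹) := by
  refine Function.FactorsThrough.extend_apply (fun a b h => ?_) _ _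
  rw [orbitLabel_eq_iff hu] at h ⊢
  simpa [mul_smul] using h

theorem labelShift_lt {x : X} {n : ℕ} [NeZero n] (hx : orbitIndex G σ x = n) (g : G) {j : ℕ}
    (hj : j < n) : labelShift σ u g x j < n := by
  obtain ⟨a, rfl⟩ := exists_orbitLabel_eq hu hx hj
  rw [labelShift_orbitLabel hu]
  exact orbitLabel_lt hu ((orbitIndex_smul σ g x).trans hx) _

theorem labelShift_inv_labelShift {x : X} {n : ℕ} [NeZero n] (hx : orbitIndex G σ x = n)
    (g : G) {j : ℕ} (hj : j < n) : labelShift σ u g⁻¹ (g • x) (labelShift σ u g x j) = j := by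
  obtain ⟨a, rfl⟩ := exists_orbitLabel_eq hu hx hj
  rw [labelShift_orbitLabel hu, labelShift_orbitLabel hu, inv_smul_smul, inv_inv,
    inv_mul_cancel_right]

omit hu in
variable (σ) in
noncomputable def indexCocycle (hu : Function.Surjective u) (n : ℕ) [NeZero n] (g : G) (x : X) :
    Equiv.Perm (Fin n) :=
  if hx : orbitIndex G σ x = n then
    { toFun := fun j => ⟨labelShift σ u g x j, labelShift_lt hu hx g j.2⟩
      invFun := fun j => ⟨labelShift σ u g⁻¹ (g • x) j,
        labelShift_lt hu ((orbitIndex_smul σ g x).trans hx) g⁻¹ j.2⟩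
      left_inv := fun j => Fin.ext (labelShift_inv_labelShift hu hx g j.2)
      right_inv := fun j => Fin.ext <| by
        simpa using labelShift_inv_labelShift hu ((orbitIndex_smul σ g x).trans hx) g⁻¹ j.2 }
  else 1

variable {n : ℕ} [NeZero n]

theorem indexCocycle_apply {x : X} (hx : orbitIndex G σ x = n) (g : G) (j : Fin n) :
    (indexCocycle σ hu n g x j : ℕ) = labelShift σ u g x j := by
  rw [indexCocycle, dif_pos hx]
  rfl

theorem indexCocycle_mul (g₁ g₂ : G) (x : X) :
    indexCocycle σ hu n (g₁ * g₂) x =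
      indexCocycle σ hu n g₁ (g₂ • x) * indexCocycle σ hu n g₂ x := by
  by_cases hx : orbitIndex G σ x = n
  · have hx₂ : orbitIndex G σ (g₂ • x) = n := (orbitIndex_smul σ g₂ x).trans hx
    ext j
    obtain ⟨a, ha⟩ := exists_orbitLabel_eq hu hx j.2
    rw [Equiv.Perm.mul_apply, indexCocycle_apply hu hx, indexCocycle_apply hu hx₂,
      indexCocycle_apply hu hx, ← ha, labelShift_orbitLabel hu, labelShift_orbitLabel hu,
      labelShift_orbitLabel hu, mul_smul, mul_inv_rev, mul_assoc]
  · have hx₂ : orbitIndex G σ (g₂ • x) ≠ n := (orbitIndex_smul σ g₂ x).trans_ne hx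
    simp only [indexCocycle, dif_neg hx, dif_neg hx₂, mul_one]

theorem indexCocycle_orbitLabel_self (hu₀ : u 0 = 1) {x : X} (hx : orbitIndex G σ x = n) (g : G)
    {j : Fin n} (hj : (j : ℕ) = orbitLabel σ u x g) : indexCocycle σ hu n g x j = 0 := by
  refine Fin.ext ?_
  rw [indexCocycle_apply hu hx, hj, labelShift_orbitLabel hu, mul_inv_cancel,
    orbitLabel_one hu₀, Fin.val_zero]

end IndexCocycle

section Measurability

variable {X : Type*} [MeasurableSpace X]
  {G : Type*} [Group G] [MulAction G X] [MeasurableConstSMul G X] {σ : Setoid X}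
  {u : ℕ → G} (hσ : MeasurableSet {p : X × X | σ p.1 p.2}) (hu : Function.Surjective u)
include hσ hu

omit hu in
theorem measurableSet_smul_rel (a b : G) : MeasurableSet {x : X | σ (a • x) (b • x)} :=
  (measurable_const_smul a).prodMk (measurable_const_smul b) hσ

theorem measurable_firstIndex (b : G) :
    Measurable fun x : X => firstIndex (σ.comap (· • x)) u b :=
  measurable_sInf_nat (fun k => measurableSet_smul_rel hσ (u k) b)
    (fun _ => ⟨_, firstIndex_spec hu b⟩)

theorem measurable_orbitLabel (a : G) : Measurable fun x : X => orbitLabel σ u x a := by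
  classical
  have hfirst : ∀ k, MeasurableSet {x : X | IsFirstIndex (σ.comap (· • x)) u k} :=
    fun k => measurable_firstIndex hσ hu (u k) (measurableSet_singleton k)
  exact (measurable_from_prod_countable_left (f := fun p : X × ℕ =>
    Nat.count (IsFirstIndex (σ.comap (· • p.1)) u) p.2) (measurable_count hfirst)).comp
    (measurable_id.prodMk (measurable_firstIndex hσ hu a))

variable [Countable G]

theorem measurableSet_orbitIndex_eq {n : ℕ} (hn : n ≠ 0) :
    MeasurableSet {x : X | orbitIndex G σ x = n} := by
  have hrange : {x : X | orbitIndex G σ x = n} =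
      {x | ∀ a, orbitLabel σ u x a < n} ∩ {x | ∀ j < n, ∃ a, orbitLabel σ u x a = j} := by
    ext x
    rw [Set.mem_ofPred_eq, orbitIndex_eq_iff_range_orbitLabel hu hn, Set.Subset.antisymm_iff,
      Set.range_subset_iff]
    rfl
  rw [hrange, Set.ofPred_forall, Set.ofPred_forall]
  refine .inter (.iInter fun a => measurable_orbitLabel hσ hu a measurableSet_Iio)
    (.iInter fun j => .imp (.const _) ?_)
  rw [Set.ofPred_exists]
  exact .iUnion fun a => measurable_orbitLabel hσ hu a (measurableSet_singleton j)

omit hu in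
theorem measurable_orbitIndex : Measurable (orbitIndex G σ : X → ℕ) := by
  obtain ⟨u, hu⟩ := exists_surjective_nat G
  refine measurable_to_countable' fun n => ?_
  rcases n with _ | n
  · have : orbitIndex G σ ⁻¹' {0} = (⋃ n, {x : X | orbitIndex G σ x = n + 1})ᶜ := by
      ext x
      simp only [Set.mem_preimage, Set.mem_singleton_iff, Set.mem_compl_iff, Set.mem_iUnion,
        Set.mem_ofPred_eq, not_exists]
      exact ⟨fun h i => by omega, fun h => by_contra fun h0 =>
        h _ (Nat.succ_pred_eq_of_ne_zero h0).symm⟩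
    rw [this]
    exact (MeasurableSet.iUnion fun n => measurableSet_orbitIndex_eq hσ hu n.succ_ne_zero).compl
  · exact measurableSet_orbitIndex_eq hσ hu n.succ_ne_zero

theorem measurableSet_indexCocycle_eq (n : ℕ) [NeZero n] (g : G) (τ : Equiv.Perm (Fin n)) :
    MeasurableSet {x : X | indexCocycle σ hu n g x = τ} := by
  have hchar : {x : X | indexCocycle σ hu n g x = τ} =
      {x | orbitIndex G σ x = n ∧ ∀ a (j : Fin n), orbitLabel σ u x a = j →
          orbitLabel σ u (g • x) (a * g⁻¹) = τ j} ∪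
        {x | orbitIndex G σ x ≠ n ∧ 1 = τ} := by
    ext x
    by_cases hx : orbitIndex G σ x = n
    · simp only [Set.mem_union, Set.mem_ofPred_eq, hx, true_and, ne_eq, not_true_eq_false,
        false_and, or_false, Equiv.ext_iff, Fin.ext_iff, indexCocycle_apply hu hx]
      refine ⟨fun h a j ha => ?_, fun h j => ?_⟩
      · rw [← h, ← ha, labelShift_orbitLabel hu]
      · obtain ⟨a, ha⟩ := exists_orbitLabel_eq hu hx j.2
        rw [← h a j ha, ← ha, labelShift_orbitLabel hu]
    · simp [indexCocycle, hx]
  have hidx : MeasurableSet {x : X | orbitIndex G σ x = n} :=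
    measurable_orbitIndex hσ (measurableSet_singleton n)
  rw [hchar, Set.ofPred_and, Set.ofPred_and, Set.ofPred_forall]
  refine .union (hidx.inter (.iInter fun a => ?_)) (hidx.compl.inter (.const _))
  rw [Set.ofPred_forall]
  exact .iInter fun j => .imp (measurable_orbitLabel hσ hu a (measurableSet_singleton _))
    ((measurable_orbitLabel hσ hu _).comp (measurable_const_smul g) (measurableSet_singleton _))

end Measurability

section Untwisting

variable {X G : Type*} [Group G] [MulAction G X] {σ : Setoid X}

theorem orbitIndex_ne_zero_of_finset {x : X} {T : Finset X}
    (hT : ∀ y, (∃ g : G, g • y = x) → ∃ z ∈ T, σ z y) : orbitIndex G σ x ≠ 0 := by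
  choose z hzT hz using fun a : G => hT (a • x) ⟨a⁻¹, inv_smul_smul a x⟩
  have : Finite (Quotient (σ.comap fun g : G => g • x)) :=
    Finite.of_injective (fun q => (⟨z q.out, hzT _⟩ : T)) fun q q' h => by
      have hzz : z q.out = z q'.out := congrArg Subtype.val h
      exact Quotient.out_equiv_out.1 (σ.trans (σ.symm (hz _)) (hzz ▸ hz _))
  have : Nonempty (Quotient (σ.comap fun g : G => g • x)) := ⟨⟦1⟧⟩
  exact Nat.card_pos.ne'

theorem apply_zero_eq_iff_of_indexCocycle_eq {u : ℕ → G} (hu : Function.Surjective u)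
    (hu₀ : u 0 = 1) {n : ℕ} [NeZero n] {x : X} (hx : orbitIndex G σ x = n) {g : G}
    {τ τ' : Equiv.Perm (Fin n)}
    (h : indexCocycle σ hu n g x = τ'⁻¹ * τ) : τ' 0 = τ 0 ↔ σ (g • x) x := by
  have hlabel : τ ⟨orbitLabel σ u x g, orbitLabel_lt hu hx g⟩ = τ' 0 :=
    Equiv.Perm.inv_eq_iff_eq.1 (by
      rw [← Equiv.Perm.mul_apply, ← h]
      exact indexCocycle_orbitLabel_self hu hu₀ hx g rfl)
  rw [← hlabel, τ.injective.eq_iff, Fin.ext_iff, Fin.val_zero, ← orbitLabel_one hu₀ x,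
    orbitLabel_eq_iff hu, one_smul]

end Untwisting

section Ergodicity

variable {X : Type} [MeasurableSpace X] {μ : Measure X} [IsProbabilityMeasure μ]
  {G : Type*} [Group G] [Countable G] [MulAction G X] [MeasurableConstSMul G X] {σ : Setoid X}
  (hσ : MeasurableSet {p : X × X | σ p.1 p.2}) (hS : IsErgodicRel μ {p : X × X | σ p.1 p.2})
  (hsub : ∀ ⦃x y⦄, σ x y → ∃ g : G, g • y = x)
include hσ hS hsub

theorem exists_ae_orbitIndex_eq
    (hfin : ∀ᵐ x ∂μ, ∃ T : Finset X, ∀ y, (∃ g : G, g • y = x) → ∃ z ∈ T, σ z y) :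
    ∃ n ≠ 0, ∀ᵐ x ∂μ, orbitIndex G σ x = n := by
  obtain ⟨n, hn⟩ := hS.exists_ae_eq (E := Set.univ) (ψ := orbitIndex G σ)
    (.of_forall fun _ => trivial)
    (fun n => by simpa using measurable_orbitIndex hσ (measurableSet_singleton n))
    (fun x _ y hxy => ⟨trivial, by
      obtain ⟨g, rfl⟩ := hsub (show σ x y from hxy)
      exact (orbitIndex_smul σ g y).symm⟩)
  obtain ⟨x, hx, T, hT⟩ := (hn.and hfin).exists
  exact ⟨n, hx.2 ▸ orbitIndex_ne_zero_of_finset hT, hn.mono fun _ hx => hx.2⟩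

theorem ae_smul_rel_of_indexCocycle_eq (hmp : ∀ g : G, MeasurePreserving (g • ·) μ μ)
    {u : ℕ → G} (hu : Function.Surjective u) (hu₀ : u 0 = 1) {n : ℕ} [NeZero n]
    (hn : ∀ᵐ x ∂μ, orbitIndex G σ x = n) {φ : X → Equiv.Perm (Fin n)}
    (hφ : ∀ τ, MeasurableSet {x | φ x = τ})
    (hc : ∀ g : G, ∀ᵐ x ∂μ, indexCocycle σ hu n g x = (φ (g • x))⁻¹ * φ x) :
    ∀ᵐ x ∂μ, ∀ g : G, σ (g • x) x := by
  let W := {x | orbitIndex G σ x = n} ∩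
    ⋂ g : G, {x | indexCocycle σ hu n g x = (φ (g • x))⁻¹ * φ x}
  have hW : MeasurableSet W :=
    (measurable_orbitIndex hσ (measurableSet_singleton n)).inter <| .iInter fun g =>
      measurableSet_eq_inv_mul (measurableSet_indexCocycle_eq hσ hu n g)
        (fun τ => measurable_const_smul g (hφ τ)) hφ
  let E := ⋂ g : G, (g • ·) ⁻¹' W
  have hE : MeasurableSet E := .iInter fun g => measurable_const_smul g hW
  have hEae : ∀ᵐ x ∂μ, x ∈ E := (ae_forall_smul hmp (hn.and (ae_all_iff.2 hc))).mono
    fun x hx => Set.mem_iInter.2 fun g => ⟨(hx g).1, Set.mem_iInter.2 (hx g).2⟩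
  have hzero : ∀ x ∈ E, ∀ g : G, φ (g • x) 0 = φ x 0 ↔ σ (g • x) x := fun x hx g => by
    have hxW : x ∈ W := by simpa using Set.mem_iInter.1 hx 1
    exact apply_zero_eq_iff_of_indexCocycle_eq hu hu₀ hxW.1 (Set.mem_iInter.1 hxW.2 g)
  obtain ⟨j, hj⟩ := hS.exists_ae_eq (ψ := fun x => φ x 0) hEae
    (fun j => hE.inter <| by
      change MeasurableSet (φ ⁻¹' {τ | τ 0 = j})
      rw [← Set.biUnion_preimage_singleton]
      exact .biUnion (Set.to_countable _) fun τ _ => hφ τ)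
    (fun x hx y hxy => by
      obtain ⟨g, rfl⟩ := hsub (show σ x y from hxy)
      have hy : y ∈ E := Set.mem_iInter.2 fun g' => by
        simpa [mul_smul] using Set.mem_iInter.1 hx (g' * g⁻¹)
      exact ⟨hy, ((hzero y hy g).2 hxy).symm⟩)
  filter_upwards [hj, ae_forall_smul hmp hj] with x hx hgx g
  exact (hzero x hx.1 g).1 ((hgx g).2.trans hx.2.symm)

end Ergodicity

theorem no_proper_finite_index_ergodic_subrel_of_superrigid_general
    {X : Type} [MeasurableSpace X]
    (μ : Measure X) [IsProbabilityMeasure μ]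
    (G : Type) [Group G] [Countable G] [MulAction G X]
    (hnofin : ∀ (Q : Type) [Group Q] [Finite Q], ∀ f : G →* Q,
      Function.Surjective f → ∀ g : G, f g = 1)
    (hmeas : ∀ g : G, Measurable fun x : X => g • x)
    (hmp : ∀ g : G, MeasurePreserving (fun x : X => g • x) μ μ)
    (hsr : ∀ (H : Type) [Group H] [Countable H], ∀ c : G → X → H,
      (∀ (h : H) (g : G), MeasurableSet {x | c g x = h}) →
      (∀ (g₁ g₂ : G) (x : X), c (g₁ * g₂) x = c g₁ (g₂ • x) * c g₂ x) →
      ∃ (ρ : G →* H) (φ : X → H), (∀ h : H, MeasurableSet {x | φ x = h}) ∧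
        ∀ g : G, ∀ᵐ x ∂μ, c g x = (φ (g • x))⁻¹ * ρ g * φ x) :
    ∀ S : Set (X × X),
      S ⊆ {p : X × X | ∃ g : G, g • p.2 = p.1} →
      MeasurableSet S →
      (∀ x, (x, x) ∈ S) →
      (∀ ⦃x y⦄, (x, y) ∈ S → (y, x) ∈ S) →
      (∀ ⦃x y z⦄, (x, y) ∈ S → (y, z) ∈ S → (x, z) ∈ S) →
      IsErgodicRel μ S →
      (∀ᵐ x ∂μ, ∃ T : Finset X, ∀ y, (∃ g : G, g • y = x) →
        ∃ z ∈ T, (z, y) ∈ S) →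
      ∀ᵐ x ∂μ, ∀ y, (∃ g : G, g • y = x) → (x, y) ∈ S := by
  intro S hsub hSmeas hrefl hsymm htrans hSerg hfin
  have : MeasurableConstSMul G X := ⟨hmeas⟩
  let σ : Setoid X := ⟨fun x y => (x, y) ∈ S, ⟨hrefl, fun h => hsymm h, fun h h' => htrans h h'⟩⟩
  obtain ⟨u, hu, hu₀⟩ := exists_surjective_nat_zero_eq (1 : G)
  obtain ⟨n, hn₀, hn⟩ := exists_ae_orbitIndex_eq (σ := σ) hSmeas hSerg (fun _ _ h => hsub h) hfin
  have : NeZero n := ⟨hn₀⟩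
  obtain ⟨ρ, φ, hφ, hc⟩ := hsr (Equiv.Perm (Fin n)) (indexCocycle σ hu n)
    (fun τ g => measurableSet_indexCocycle_eq hSmeas hu n g τ) (indexCocycle_mul hu)
  have hρ : ρ = 1 := ρ.eq_one_of_forall_finite_quotient hnofin
  have hcob : ∀ g : G, ∀ᵐ x ∂μ, indexCocycle σ hu n g x = (φ (g • x))⁻¹ * φ x := fun g =>
    (hc g).mono fun x hx => by rw [hx, hρ, MonoidHom.one_apply, mul_one]
  filter_upwards [ae_smul_rel_of_indexCocycle_eq hSmeas hSerg (fun _ _ h => hsub h) hmp hu hu₀ hn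
    hφ hcob] with x hx y ⟨g, hg⟩
  subst hg
  have h := hx g⁻¹
  rw [inv_smul_smul] at h
  exact hsymm h

/-- if a countably infinite group `G` with no nontrivial finite
quotients acts essentially freely, ergodically and p.m.p. on `(X,μ)` and the
action is cocycle superrigid, then the orbit equivalence relation `R` has no
proper finite-index ergodic subequivalence relation: every ergodic
finite-index `S ≤ R` equals `R` a.e. -/
theorem no_proper_finite_index_ergodic_subrel_of_superrigid
    {X : Type} [MeasurableSpace X] [StandardBorelSpace X]
    (μ : Measure X) [IsProbabilityMeasure μ] [NullSingletonClass μ]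
    (G : Type) [Group G] [Countable G] [Infinite G] [MulAction G X]
    (hnofin : ∀ (Q : Type) [Group Q] [Finite Q], ∀ f : G →* Q,
      Function.Surjective f → ∀ g : G, f g = 1)
    (hmeas : ∀ g : G, Measurable fun x : X => g • x)
    (hmp : ∀ g : G, MeasurePreserving (fun x : X => g • x) μ μ)
    (hfree : ∀ᵐ x ∂μ, ∀ g : G, g • x = x → g = 1)
    (hergodic : ∀ A : Set X, MeasurableSet A →
      (∀ (g : G) (x : X), x ∈ A → g • x ∈ A) → μ A = 0 ∨ μ A = 1)
    (hsr : ∀ (H : Type) [Group H] [Countable H], ∀ c : G → X → H,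
      (∀ (h : H) (g : G), MeasurableSet {x | c g x = h}) →
      (∀ (g₁ g₂ : G) (x : X), c (g₁ * g₂) x = c g₁ (g₂ • x) * c g₂ x) →
      ∃ (ρ : G →* H) (φ : X → H), (∀ h : H, MeasurableSet {x | φ x = h}) ∧
        ∀ g : G, ∀ᵐ x ∂μ, c g x = (φ (g • x))⁻¹ * ρ g * φ x) :
    ∀ S : Set (X × X),
      S ⊆ {p : X × X | ∃ g : G, g • p.2 = p.1} →
      MeasurableSet S →
      (∀ x, (x, x) ∈ S) →
      (∀ ⦃x y⦄, (x, y) ∈ S → (y, x) ∈ S) →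
      (∀ ⦃x y z⦄, (x, y) ∈ S → (y, z) ∈ S → (x, z) ∈ S) →
      IsErgodicRel μ S →
      (∀ᵐ x ∂μ, ∃ T : Finset X, ∀ y, (∃ g : G, g • y = x) →
        ∃ z ∈ T, (z, y) ∈ S) →
      ∀ᵐ x ∂μ, ∀ y, (∃ g : G, g • y = x) → (x, y) ∈ S :=
  no_proper_finite_index_ergodic_subrel_of_superrigid_general μ G hnofin hmeas hmp hsr
end
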